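/- Let Q = C_3[{u}, H, {v}] be the composition of the directed 3-cycle u→(each vertex of H), (each vertex of H)→v, v→u, where H is an arbitrary digraph with at most one arc. Then Q has no good (u,v)-pair. -/

import Mathlib

/-- Two arc sets (relations) are arc-disjoint. -/
def ArcDisjoint {V : Type*} (B₁ B₂ : V → V → Prop) : Prop := ∀ x y, ¬ (B₁ x y ∧ B₂ x y)

/-- `B` is (the arc set of) an out-branching of the digraph with arc relation `A`,
rooted at `u`: a spanning oriented tree in which every vertex except `u` has
in-degree one and every vertex is reachable from `u`. -/
def IsOutBranching {V : Type*} (A B : V → V → Prop) (u : V) : Prop :=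
  (∀ x y, B x y → A x y) ∧ (∀ w, w ≠ u → ∃! x, B x w) ∧ (∀ x, ¬ B x u) ∧
    (∀ w, Relation.ReflTransGen B u w)

/-- `B` is an in-branching of `A` rooted at `v`. -/
def IsInBranching {V : Type*} (A B : V → V → Prop) (v : V) : Prop :=
  (∀ x y, B x y → A x y) ∧ (∀ w, w ≠ v → ∃! y, B w y) ∧ (∀ y, ¬ B v y) ∧
    (∀ w, Relation.ReflTransGen B w v)

/-- A good `(u,v)`-pair: an arc-disjoint pair of an out-branching rooted at `u`
and an in-branching rooted at `v`. -/
def GoodPair {V : Type*} (A : V → V → Prop) (u v : V) : Prop :=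
  ∃ B₁ B₂, IsOutBranching A B₁ u ∧ IsInBranching A B₂ v ∧ ArcDisjoint B₁ B₂

/-- A digraph is strong if every vertex can reach every other vertex. -/
def IsStrong {V : Type*} (A : V → V → Prop) : Prop := ∀ x y, Relation.ReflTransGen A x y

/-- `k`-arc-strong: removing any set of fewer than `k` arcs leaves a strong digraph. -/
def IsKArcStrong {V : Type*} (A : V → V → Prop) (k : ℕ) : Prop :=
  ∀ F : Set (V × V), F.Finite → F.ncard < k →
    IsStrong fun x y => A x y ∧ (x, y) ∉ F

/-- The composition `D[H₁,…,Hₙ]` of a digraph `D` on index type `ι` with digraphs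
`H i` on types `β i`: vertices are `Σ i, β i`; arcs are the internal arcs of each
`H i` together with all arcs from `β i` to `β j` whenever `D i j` and `i ≠ j`. -/
def Comp {ι : Type*} {β : ι → Type*} (D : ι → ι → Prop) (H : ∀ i, β i → β i → Prop) :
    (Σ i, β i) → (Σ i, β i) → Prop :=
  fun x y => (∃ h : y.1 = x.1, H x.1 x.2 (h ▸ y.2)) ∨ (x.1 ≠ y.1 ∧ D x.1 y.1)

/-- The composition `C₃[{u}, H, {v}]`: arcs `u → h`, `h → v` for all `h ∈ H`,
`v → u`, and the internal arcs `RH` of `H`. -/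
def Q8 {Ht : Type*} (RH : Ht → Ht → Prop) :
    (Unit ⊕ Ht ⊕ Unit) → (Unit ⊕ Ht ⊕ Unit) → Prop
  | Sum.inl _, Sum.inr (Sum.inl _) => True
  | Sum.inr (Sum.inl a), Sum.inr (Sum.inl b) => RH a b
  | Sum.inr (Sum.inl _), Sum.inr (Sum.inr _) => True
  | Sum.inr (Sum.inr _), Sum.inl _ => True
  | _, _ => False

/-!
Let `B₁` be the out-branching from `u` and `B₂` the in-branching into `v`. The `B₁`-arc into `v`
leaves some `h₀ ∈ H`, and the `B₂`-arc out of `u` enters some `h₁ ∈ H`. Since `u → h₁` is taken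
by `B₂`, the `B₁`-arc into `h₁` is an arc `a → h₁` of `H`; since `h₀ → v` is taken by `B₁`, the
`B₂`-arc out of `h₀` is an arc `h₀ → b` of `H`. As `H` has at most one arc, both are `h₀ → h₁`,
which the two branchings would then share.
-/

namespace Q8

variable {Ht : Type*} {RH : Ht → Ht → Prop}

lemma exists_eq_of_adj_sink {x : Unit ⊕ Ht ⊕ Unit} (hx : Q8 RH x (.inr (.inr ()))) :
    ∃ h, x = .inr (.inl h) := by
  rcases x with _ | h | _
  exacts [hx.elim, ⟨h, rfl⟩, hx.elim]

lemma exists_eq_of_source_adj {y : Unit ⊕ Ht ⊕ Unit} (hy : Q8 RH (.inl ()) y) :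
    ∃ h, y = .inr (.inl h) := by
  rcases y with _ | h | _
  exacts [hy.elim, ⟨h, rfl⟩, hy.elim]

lemma eq_source_or_internal_of_adj {x : Unit ⊕ Ht ⊕ Unit} {h : Ht}
    (hx : Q8 RH x (.inr (.inl h))) : x = .inl () ∨ ∃ a, x = .inr (.inl a) ∧ RH a h := by
  rcases x with _ | a | _
  exacts [.inl rfl, .inr ⟨a, rfl, hx⟩, hx.elim]

lemma eq_sink_or_internal_of_adj {y : Unit ⊕ Ht ⊕ Unit} {h : Ht}
    (hy : Q8 RH (.inr (.inl h)) y) : y = .inr (.inr ()) ∨ ∃ b, y = .inr (.inl b) ∧ RH h b := by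
  rcases y with _ | b | _
  exacts [hy.elim, .inr ⟨b, rfl, hy⟩, .inl rfl]

end Q8

theorem stmt_8_general {Ht : Type*} (RH : Ht → Ht → Prop)
    (hone : ∀ a b c d, RH a b → RH c d → a = c ∧ b = d) :
    ¬ GoodPair (Q8 RH) (Sum.inl ()) (Sum.inr (Sum.inr ())) := by
  rintro ⟨B₁, B₂, ⟨hB₁, hin, -, -⟩, ⟨hB₂, hout, -, -⟩, hdisj⟩
  obtain ⟨x, hx, -⟩ := hin (.inr (.inr ())) (by simp)
  obtain ⟨h₀, rfl⟩ := Q8.exists_eq_of_adj_sink (hB₁ _ _ hx)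
  obtain ⟨y, hy, -⟩ := hout (.inl ()) (by simp)
  obtain ⟨h₁, rfl⟩ := Q8.exists_eq_of_source_adj (hB₂ _ _ hy)
  obtain ⟨x₁, hx₁, -⟩ := hin (.inr (.inl h₁)) (by simp)
  obtain rfl | ⟨a, rfl, ha⟩ := Q8.eq_source_or_internal_of_adj (hB₁ _ _ hx₁)
  · exact hdisj _ _ ⟨hx₁, hy⟩
  obtain ⟨y₀, hy₀, -⟩ := hout (.inr (.inl h₀)) (by simp)
  obtain rfl | ⟨b, rfl, hb⟩ := Q8.eq_sink_or_internal_of_adj (hB₂ _ _ hy₀)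
  · exact hdisj _ _ ⟨hx, hy₀⟩
  obtain ⟨rfl, rfl⟩ := hone _ _ _ _ ha hb
  exact hdisj _ _ ⟨hx₁, hy₀⟩

/-- If `H` has at most one arc then `C₃[{u}, H, {v}]` has no good `(u,v)`-pair. -/
theorem stmt_8 {Ht : Type*} [Fintype Ht] (RH : Ht → Ht → Prop)
    (hone : ∀ a b c d, RH a b → RH c d → a = c ∧ b = d) :
    ¬ GoodPair (Q8 RH) (Sum.inl ()) (Sum.inr (Sum.inr ())) :=
  stmt_8_general RH hone
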